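/- arXiv:1504.02717 — 8 statements merged into one kernel-verified Lean document; each statement's English description precedes it below -/
import Mathlib

section
/- If (S, N) is a normalisation and e is an N-neutral element of S, then for every ℓ ≥ 0 and all words w₀, w₁, …, w_ℓ over S, one has N(w₀·e·w₁·e·…·w_{ℓ−1}·e·w_ℓ) = N(w₀·w₁·…·w_ℓ)·e^ℓ, where e^ℓ denotes the word consisting of ℓ copies of e. -/
namespace QN

variable {S A : Type*}

/-- A normalisation: a length-preserving map `N` on words over `S` fixing
length-one words and satisfying `N (u ++ N w ++ v) = N (u ++ w ++ v)`. -/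
structure Normalisation (S : Type*) where
  N : List S → List S
  length_eq : ∀ w : List S, (N w).length = w.length
  single : ∀ s : S, N [s] = [s]
  mid : ∀ u v w : List S, N (u ++ N w ++ v) = N (u ++ w ++ v)

/-- Extract the two entries of a length-two word (with a default fallback). -/
def pairOf : List S → S → S → S × S
  | [x, y], _, _ => (x, y)
  | _, s, t => (s, t)

/-- The restriction `N̄` of `N` to length-two words, as a map on pairs. -/
def nbar (N : List S → List S) (s t : S) : S × S :=
  pairOf (N [s, t]) s t

/-- Apply `f` to the length-two factor at (1-indexed) position `i`;
out-of-range positions act as the identity. -/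
def applyAt (f : S → S → S × S) : ℕ → List S → List S
  | 1, a :: b :: l => (f a b).1 :: (f a b).2 :: l
  | n + 2, a :: l => a :: applyAt f (n + 1) l
  | _, l => l

/-- `φ_u`: apply `φ` at the successive positions of `u`, leftmost entry of `u` first. -/
def applySeq (f : S → S → S × S) (u : List ℕ) (w : List S) : List S :=
  u.foldl (fun w i => applyAt f i w) w

/-- A word is `N`-normal iff all its length-two factors are `N`-normal. -/
def LocallyNormal (N : List S → List S) : Prop :=
  ∀ w : List S, N w = w ↔ ∀ u v : List S, ∀ s t : S, w = u ++ s :: t :: v → N [s, t] = [s, t]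

/-- Every word is normalised by finitely many applications of `N̄` at positions. -/
def NbarGenerated (N : List S → List S) : Prop :=
  ∀ w : List S, ∃ u : List ℕ, N w = applySeq (nbar N) u w

/-- A normalisation map is quadratic if it satisfies the two locality conditions. -/
def Quadratic (N : List S → List S) : Prop :=
  LocallyNormal N ∧ NbarGenerated N

/-- `e` is `N`-neutral: `N (w·e) = N (e·w) = N w · e`. -/
def Neutral (N : List S → List S) (e : S) : Prop :=
  ∀ w : List S, N (w ++ [e]) = N w ++ [e] ∧ N (e :: w) = N w ++ [e]

/-- The alternating sequence of length `m` starting with `k ∈ {1,2}`. -/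
def altFrom : ℕ → ℕ → List ℕ
  | _, 0 => []
  | k, n + 1 => k :: altFrom (3 - k) n

/-- `(S, N)` is of left-class `c`: `N = N̄_{α_c}` on length-three words. -/
def LeftClass (N : List S → List S) (c : ℕ) : Prop :=
  ∀ w : List S, w.length = 3 → N w = applySeq (nbar N) (altFrom 1 c) w

/-- `(S, N)` is of right-class `c`: `N = N̄_{ᾱ_c}` on length-three words. -/
def RightClass (N : List S → List S) (c : ℕ) : Prop :=
  ∀ w : List S, w.length = 3 → N w = applySeq (nbar N) (altFrom 2 c) w

/-- The domino rule is valid for `f`. -/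
def DominoRule (f : S → S → S × S) : Prop :=
  ∀ s₁ s₂ s₁' s₂' t₀ t₁ t₂ : S,
    f t₀ s₁ = (s₁', t₁) → f t₁ s₂ = (s₂', t₂) →
    f s₁ s₂ = (s₁, s₂) → f s₁' s₂' = (s₁', s₂')

/-- The sequences `δ_p`: `δ₁ = ε` and `δ_p = sh(δ_{p-1})·1·2·⋯·(p-1)`. -/
def delta : ℕ → List ℕ
  | 0 => []
  | 1 => []
  | p + 2 => (delta (p + 1)).map (· + 1) ++ List.range' 1 (p + 1)

/-- Apply `N` to the length-`k` factor beginning at (1-indexed) position `i`. -/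
def applyFactorAt (N : List S → List S) (k : ℕ) : ℕ → List S → List S
  | 0, w => w
  | i + 1, w => w.take i ++ N ((w.drop i).take k) ++ w.drop (i + k)

/-- Apply `N` to length-`k` factors at the successive positions of `u`. -/
def applyFactorSeq (N : List S → List S) (k : ℕ) (u : List ℕ) (w : List S) : List S :=
  u.foldl (fun w i => applyFactorAt N k i w) w

/-- One-step rewriting relation of a rewriting system `R`. -/
def RStep (R : List A → List A → Prop) (x y : List A) : Prop :=
  ∃ u v w w', R w w' ∧ x = u ++ w ++ v ∧ y = u ++ w' ++ v

/-- A rewriting system is terminating if it admits no infinite rewriting sequence. -/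
def Terminating (R : List A → List A → Prop) : Prop :=
  ¬ ∃ f : ℕ → List A, ∀ n, RStep R (f n) (f (n + 1))

/-- Confluence of a rewriting system. -/
def Confluent (R : List A → List A → Prop) : Prop :=
  ∀ w w₁ w₂ : List A, Relation.ReflTransGen (RStep R) w w₁ →
    Relation.ReflTransGen (RStep R) w w₂ →
    ∃ w', Relation.ReflTransGen (RStep R) w₁ w' ∧ Relation.ReflTransGen (RStep R) w₂ w'

/-- A word is `R`-normal if no rule of `R` applies to any of its factors. -/
def RNormal (R : List A → List A → Prop) (w : List A) : Prop :=
  ¬ ∃ w', RStep R w w'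

/-- Every word rewrites to some `R`-normal word. -/
def Normalising (R : List A → List A → Prop) : Prop :=
  ∀ w : List A, ∃ w', Relation.ReflTransGen (RStep R) w w' ∧ RNormal R w'

/-- A rewriting system is quadratic if all its rules relate length-two words. -/
def QuadraticRS (R : List A → List A → Prop) : Prop :=
  ∀ w w', R w w' → w.length = 2 ∧ w'.length = 2

/-- A rewriting system is reduced. -/
def ReducedRS (R : List A → List A → Prop) : Prop :=
  ∀ w w', R w w' → RNormal R w' ∧ RNormal (fun a b => R a b ∧ ¬(a = w ∧ b = w')) w

/-- The rewriting system associated with a quadratic normalisation: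
one rule `s·t → N̄(s·t)` for each non-`N`-normal length-two word. -/
def rules (N : List S → List S) : List S → List S → Prop :=
  fun w w' => ∃ s t : S, w = [s, t] ∧ w' = N [s, t] ∧ w' ≠ w

/-- `π_e`: delete all occurrences of `e`, landing in words over `S∖{e}`. -/
noncomputable def pie (e : S) (w : List S) : List {s : S // s ≠ e} :=
  w.filterMap fun s => @dite _ (s = e) (Classical.dec _) (fun _ => none) (fun h => some ⟨s, h⟩)

/-- The rewriting system `R_e` over `S∖{e}`. -/
def rulesE (N : List S → List S) (e : S) :
    List {s : S // s ≠ e} → List {s : S // s ≠ e} → Prop :=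
  fun w w' => ∃ s t : {s : S // s ≠ e},
    w = [s, t] ∧ N [s.1, t.1] ≠ [s.1, t.1] ∧ w' = pie e (N [s.1, t.1])

/-- `M` admits the monoid presentation `⟨S ∣ r⟩`. -/
def PresentedBy (M : Type*) [Monoid M] (S : Type*) (r : List S → List S → Prop) : Prop :=
  Nonempty ((conGen fun a b : FreeMonoid S => r a.toList b.toList).Quotient ≃* M)

/-- Left-divisibility in a monoid. -/
def LeftDvd {M : Type*} [Monoid M] (f g : M) : Prop :=
  ∃ g', f * g' = g

/-- The pair `s₁, s₂` is `S`-normal (greedy). -/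
def SNormalPair {M : Type*} [Monoid M] (S : Set M) (s₁ s₂ : M) : Prop :=
  ∀ s ∈ S, ∀ f : M, LeftDvd s (f * s₁ * s₂) → LeftDvd s (f * s₁)

/-- A word over `S` is `S`-normal if all its adjacent pairs are. -/
def SNormalWord {M : Type*} [Monoid M] (S : Set M) (w : List S) : Prop :=
  ∀ u v : List S, ∀ a b : S, w = u ++ a :: b :: v → SNormalPair S (a : M) (b : M)

end QN

open QN

theorem my_rep {S : Type*} (ns : Normalisation S) (e : S) (he : Neutral ns.N e)
    (u : List S) (k : ℕ) :
    ns.N (u ++ List.replicate k e) = ns.N u ++ List.replicate k e := by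
  induction k with
  | zero => simp
  | succ k ih =>
    rw [List.replicate_succ', ← List.append_assoc, (he _).1, ih, List.append_assoc]

theorem my_mid_e {S : Type*} (ns : Normalisation S) (e : S) (he : Neutral ns.N e)
    (u v : List S) : ns.N (u ++ e :: v) = ns.N (u ++ v) ++ [e] := by
  have h1 := ns.mid u [] (e :: v)
  simp only [List.append_nil] at h1
  rw [(he v).2] at h1
  have h2 := ns.mid u [] v
  simp only [List.append_nil] at h2
  calc ns.N (u ++ e :: v) = ns.N (u ++ (ns.N v ++ [e])) := h1.symm
    _ = ns.N ((u ++ ns.N v) ++ [e]) := by rw [List.append_assoc]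
    _ = ns.N (u ++ ns.N v) ++ [e] := (he _).1
    _ = ns.N (u ++ v) ++ [e] := by rw [h2]
/-- If `e` is `N`-neutral, then
`N(w₀·e·w₁·e·⋯·e·w_ℓ) = N(w₀·⋯·w_ℓ)·e^ℓ`. -/
theorem statement1 {S : Type*} (ns : Normalisation S) (e : S) (he : Neutral ns.N e)
    (ws : List (List S)) (hws : ws ≠ []) :
    ns.N (List.intersperse [e] ws).flatten =
      ns.N ws.flatten ++ List.replicate (ws.length - 1) e := by
  induction ws with
  | nil => exact absurd rfl hws
  | cons w ws ih =>
    cases ws with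
    | nil => simp
    | cons x ws =>
      have ih' := ih (by simp)
      have hrest : (List.intersperse [e] (w :: x :: ws)).flatten
          = w ++ e :: (List.intersperse [e] (x :: ws)).flatten := by
        simp [List.intersperse]
      rw [hrest, my_mid_e ns e he]
      have h2 := ns.mid w [] (List.intersperse [e] (x :: ws)).flatten
      simp only [List.append_nil] at h2
      rw [← h2, ih', ← List.append_assoc, my_rep ns e he]
      have h3 := ns.mid w [] (x :: ws).flatten
      simp only [List.append_nil] at h3
      rw [h3]
      simp [List.replicate_succ', List.append_assoc]
end

section
/- If (S, N) is a quadratic normalisation for a monoid M, then the restriction N̄ of N to length-two words is idempotent, and M admits the presentation ⟨S | {s·t = N̄(s·t) : s, t ∈ S}⟩. -/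
open QN

/-! Idempotence of `N̄` is axiom (iii) with `u = v = ε`. For the presentation, every relation
`w = N(w)` follows from the quadratic ones: by quadraticity `N(w)` is reached from `w` by finitely
many applications of `N̄`, each of which replaces a factor `s·t` by `N(s·t)`. -/

namespace QN

variable {S : Type*}

theorem pairOf_of_length_eq_two {w : List S} (hw : w.length = 2) (s t : S) :
    [(pairOf w s t).1, (pairOf w s t).2] = w := by
  match w, hw with
  | [_, _], _ => rfl

theorem rel_applyAt (c : Con (FreeMonoid S)) (f : S → S → S × S)
    (hf : ∀ a b, c (.ofList [a, b]) (.ofList [(f a b).1, (f a b).2])) :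
    ∀ (i : ℕ) (w : List S), c (.ofList w) (.ofList (applyAt f i w))
  | 1, a :: b :: l => by
    simpa only [applyAt, FreeMonoid.ofList_cons, ← mul_assoc, FreeMonoid.ofList_singleton,
      FreeMonoid.ofList_nil, mul_one] using c.mul (hf a b) (c.refl (.ofList l))
  | n + 2, a :: l => by
    simpa only [applyAt, FreeMonoid.ofList_cons] using
      c.mul (c.refl (.of a)) (rel_applyAt c f hf (n + 1) l)
  | 0, _ | 1, [] | 1, [_] | _ + 2, [] => c.refl _

theorem rel_applySeq (c : Con (FreeMonoid S)) (f : S → S → S × S)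
    (hf : ∀ a b, c (.ofList [a, b]) (.ofList [(f a b).1, (f a b).2]))
    (u : List ℕ) (w : List S) :
    c (.ofList w) (.ofList (applySeq f u w)) := by
  induction u generalizing w with
  | nil => exact c.refl _
  | cons i u ih => exact c.trans (rel_applyAt c f hf i w) (ih _)

theorem conGen_eq_conGen_quadratic (ns : Normalisation S) (hgen : NbarGenerated ns.N) :
    conGen (fun a b : FreeMonoid S => b.toList = ns.N a.toList) =
      conGen (fun a b : FreeMonoid S => ∃ s t : S, a.toList = [s, t] ∧ b.toList = ns.N [s, t]) := by
  set c := conGen fun a b : FreeMonoid S => ∃ s t : S, a.toList = [s, t] ∧ b.toList = ns.N [s, t]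
  refine le_antisymm (Con.conGen_le.2 fun a b hab => ?_)
    (Con.conGen_le.2 fun a b ⟨s, t, ha, hb⟩ => ConGen.Rel.of _ _ (by rw [ha, hb]))
  have hnbar : ∀ s t, c (.ofList [s, t]) (.ofList [(nbar ns.N s t).1, (nbar ns.N s t).2]) :=
    fun s t => ConGen.Rel.of _ _ ⟨s, t, rfl, by
      simp only [nbar, pairOf_of_length_eq_two (ns.length_eq [s, t]), FreeMonoid.toList_ofList]⟩
  obtain ⟨u, hu⟩ := hgen a.toList
  simpa only [← hu, ← hab, FreeMonoid.ofList_toList] using rel_applySeq c _ hnbar u a.toList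

end QN

/-- If `(S, N)` is a quadratic normalisation for a monoid `M`, then `N̄` is
idempotent and `M` admits the presentation `⟨S ∣ s·t = N̄(s·t)⟩`. -/
theorem statement2 {S M : Type*} [Monoid M] (ns : Normalisation S)
    (hq : Quadratic ns.N)
    (hpres : PresentedBy M S fun w w' => w' = ns.N w) :
    (∀ s t : S, ns.N (ns.N [s, t]) = ns.N [s, t]) ∧
    PresentedBy M S (fun w w' => ∃ s t : S, w = [s, t] ∧ w' = ns.N [s, t]) :=
  ⟨fun s t => by simpa using ns.mid [] [] [s, t],
    by rwa [PresentedBy, ← conGen_eq_conGen_quadratic ns hq.2]⟩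
end

section
/- If (S, N) is a quadratic normalisation, then an element e of S is N-neutral if and only if N̄(e·s) = N̄(s·e) = s·e holds for every s in S. -/
open QN
/-- For a quadratic normalisation `(S, N)`, an element `e` of `S` is
`N`-neutral iff `N̄(e·s) = N̄(s·e) = s·e` for every `s` in `S`. -/
theorem statement3 {S : Type*} (ns : Normalisation S) (hq : Quadratic ns.N) (e : S) :
    Neutral ns.N e ↔ ∀ s : S, ns.N [e, s] = [s, e] ∧ ns.N [s, e] = [s, e] := by

  obtain ⟨hloc, _⟩ := hq
  constructor
  · intro h s
    have h1 := (h [s]).1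
    have h2 := (h [s]).2
    rw [ns.single] at h1 h2
    exact ⟨h2, h1⟩
  · intro h
    have hA : ∀ w : List S, ns.N (ns.N w) = ns.N w := by
      intro w
      have := ns.mid [] [] w
      simpa using this
    have hC : ∀ v : List S, ns.N v = v → ns.N (v ++ [e]) = v ++ [e] := by
      intro v hv
      apply (hloc (v ++ [e])).2
      intro u u' s t heq
      rcases u'.eq_nil_or_concat with rfl | ⟨u'', x, rfl⟩
      · have heq' : v ++ [e] = (u ++ [s]) ++ [t] := by simp [heq]
        obtain ⟨hve, het⟩ := List.append_inj' heq' rfl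
        obtain rfl : t = e := by simpa using het.symm
        exact (h s).2
      · have heq' : v ++ [e] = (u ++ s :: t :: u'') ++ [x] := by simp [heq]
        obtain ⟨hv', hex⟩ := List.append_inj' heq' rfl
        exact (hloc v).1 hv u u'' s t hv'
    have hD : ∀ v : List S, ns.N (e :: v) = ns.N (v ++ [e]) := by
      intro v
      induction v with
      | nil => rfl
      | cons a v ih =>
        have hB : ns.N (e :: a :: v) = ns.N (a :: e :: v) := by
          have h0 := ns.mid [] v [e, a]
          rw [(h a).1] at h0
          simpa using h0.symm
        have h1 : ns.N (a :: e :: v) = ns.N ([a] ++ ns.N (e :: v)) := by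
          have h0 := ns.mid [a] [] (e :: v)
          simpa using h0.symm
        have h2 : ns.N ([a] ++ ns.N (v ++ [e])) = ns.N (a :: (v ++ [e])) := by
          have h0 := ns.mid [a] [] (v ++ [e])
          simpa using h0
        rw [hB, h1, ih, h2]; rfl
    intro w
    have key : ns.N (w ++ [e]) = ns.N w ++ [e] := by
      have h0 := ns.mid [] [e] w
      simp only [List.nil_append] at h0
      rw [← h0]
      exact hC (ns.N w) (hA w)
    exact ⟨key, (hD w).trans key⟩
end

section
/- If (S, N) is a quadratic normalisation for a monoid M, then the rewriting system (S, R) with R = {s·t → N̄(s·t) : s, t ∈ S, s·t ≠ N̄(s·t)} is quadratic, reduced, normalising and confluent, and it presents M, i.e., M admits the presentation ⟨S | {w = w' : (w → w') ∈ R}⟩. -/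
open QN

/-!
Quadraticity makes every word `w` rewritable to `N w`: the positions `u` with
`N w = N̄_u(w)` are rule applications (or trivial steps). Conversely a rewriting step
`u·s·t·v → u·N(s·t)·v` does not change `N`, by axiom (iii), and `N`-normal words are
`R`-normal because normality is tested on length-two factors. Hence `N w` is an `R`-normal
word reachable from every rewrite of `w`, which gives normalisation and confluence, and the
rules generate the same congruence as the relations `w = N w`.
-/

namespace QN

open Relation

variable {S A : Type*}

section Rewriting

variable {R : List A → List A → Prop}

lemma RStep.cons (a : A) {x y : List A} (h : RStep R x y) : RStep R (a :: x) (a :: y) := by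
  obtain ⟨u, v, w, w', hr, rfl, rfl⟩ := h
  exact ⟨a :: u, v, w, w', hr, rfl, rfl⟩

lemma reflTransGen_rStep_cons (a : A) {x y : List A} (h : ReflTransGen (RStep R) x y) :
    ReflTransGen (RStep R) (a :: x) (a :: y) :=
  ReflTransGen.lift (a :: ·) (fun _ _ => RStep.cons a) _ _ h

lemma RStep.rel_of_length_eq {x y : List A} (h : RStep R x y)
    (hlen : ∀ w w', R w w' → w.length = x.length) : R x y := by
  obtain ⟨u, v, w, w', hr, rfl, rfl⟩ := h
  have hw := hlen w w' hr
  simp only [List.length_append] at hw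
  obtain rfl : u = [] := List.length_eq_zero_iff.mp (by omega)
  obtain rfl : v = [] := List.length_eq_zero_iff.mp (by omega)
  simpa using hr

lemma normalising_of_reflTransGen (f : List A → List A)
    (hreach : ∀ w, ReflTransGen (RStep R) w (f w)) (hnormal : ∀ w, RNormal R (f w)) :
    Normalising R :=
  fun w => ⟨f w, hreach w, hnormal w⟩

lemma confluent_of_reflTransGen (f : List A → List A)
    (hreach : ∀ w, ReflTransGen (RStep R) w (f w)) (hinv : ∀ x y, RStep R x y → f x = f y) :
    Confluent R := by
  have hinv' : ∀ x y, ReflTransGen (RStep R) x y → f x = f y := fun x y h => by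
    induction h with
    | refl => rfl
    | tail _ hstep ih => exact ih.trans (hinv _ _ hstep)
  intro w w₁ w₂ h₁ h₂
  refine ⟨f w, ?_, ?_⟩
  · simpa only [hinv' _ _ h₁] using hreach w₁
  · simpa only [hinv' _ _ h₂] using hreach w₂

lemma conGen_of_reflTransGen {x y : List A} (h : ReflTransGen (RStep R) x y) :
    conGen (fun a b : FreeMonoid A => R a.toList b.toList)
      (FreeMonoid.ofList x) (FreeMonoid.ofList y) := by
  set c := conGen fun a b : FreeMonoid A => R a.toList b.toList
  induction h with
  | refl => exact c.refl _
  | tail _ hstep ih =>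
    obtain ⟨u, v, w, w', hr, rfl, rfl⟩ := hstep
    have hrule : c (FreeMonoid.ofList w) (FreeMonoid.ofList w') :=
      ConGen.Rel.of _ _ (by simpa using hr)
    refine c.trans ih ?_
    simpa only [FreeMonoid.ofList_append] using
      c.mul (c.mul (c.refl (FreeMonoid.ofList u)) hrule) (c.refl (FreeMonoid.ofList v))

lemma PresentedBy.of_conGen_eq {M : Type*} [Monoid M] {r r' : List A → List A → Prop}
    (h : PresentedBy M A r)
    (heq : conGen (fun a b : FreeMonoid A => r a.toList b.toList) =
      conGen fun a b : FreeMonoid A => r' a.toList b.toList) :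
    PresentedBy M A r' := by
  unfold PresentedBy at h ⊢
  rwa [← heq]

end Rewriting

namespace Normalisation

variable (ns : Normalisation S)

lemma N_N (w : List S) : ns.N (ns.N w) = ns.N w := by
  simpa using ns.mid [] [] w

lemma exists_N_pair (s t : S) : ∃ x y, ns.N [s, t] = [x, y] ∧ nbar ns.N s t = (x, y) := by
  obtain ⟨x, y, hxy⟩ := List.length_eq_two.mp (by simpa using ns.length_eq [s, t])
  exact ⟨x, y, hxy, by simp [nbar, hxy, pairOf]⟩

lemma length_eq_two_of_rules {w w' : List S} (h : rules ns.N w w') :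
    w.length = 2 ∧ w'.length = 2 := by
  obtain ⟨s, t, rfl, rfl, -⟩ := h
  simpa using ns.length_eq [s, t]

lemma N_eq_of_rStep {x y : List S} (h : RStep (rules ns.N) x y) : ns.N x = ns.N y := by
  obtain ⟨u, v, _, _, ⟨s, t, rfl, rfl, -⟩, rfl, rfl⟩ := h
  exact (ns.mid u v [s, t]).symm

lemma reflTransGen_applyAt : ∀ (i : ℕ) (w : List S),
    ReflTransGen (RStep (rules ns.N)) w (applyAt (nbar ns.N) i w)
  | 1, a :: b :: l => by
    obtain ⟨x, y, hxy, hp⟩ := ns.exists_N_pair a b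
    change ReflTransGen _ _ ((nbar ns.N a b).1 :: (nbar ns.N a b).2 :: l)
    rw [hp]
    by_cases hab : [x, y] = [a, b]
    · simp only [List.cons.injEq, and_true] at hab
      obtain ⟨rfl, rfl⟩ := hab
      exact ReflTransGen.refl
    · exact ReflTransGen.single
        ⟨[], l, [a, b], [x, y], ⟨a, b, rfl, hxy.symm, hab⟩, rfl, rfl⟩
  | n + 2, a :: l => reflTransGen_rStep_cons a (reflTransGen_applyAt (n + 1) l)
  | 0, _ | 1, [] | 1, [_] | _ + 2, [] => ReflTransGen.refl

lemma reflTransGen_applySeq (u : List ℕ) (w : List S) :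
    ReflTransGen (RStep (rules ns.N)) w (applySeq (nbar ns.N) u w) := by
  induction u generalizing w with
  | nil => exact ReflTransGen.refl
  | cons i u ih => exact (ns.reflTransGen_applyAt i w).trans (ih _)

lemma reflTransGen_N (hgen : NbarGenerated ns.N) (w : List S) :
    ReflTransGen (RStep (rules ns.N)) w (ns.N w) := by
  obtain ⟨u, hu⟩ := hgen w
  rw [hu]
  exact ns.reflTransGen_applySeq u w

end Normalisation

lemma rNormal_of_N_eq {N : List S → List S} (hloc : LocallyNormal N) {w : List S}
    (hw : N w = w) : RNormal (rules N) w := by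
  rintro ⟨_, u, v, _, _, ⟨s, t, rfl, rfl, hne⟩, hx, -⟩
  exact hne ((hloc w).mp hw u v s t (by simpa using hx))

lemma reducedRS_rules (ns : Normalisation S) (hloc : LocallyNormal ns.N) :
    ReducedRS (rules ns.N) := by
  rintro w w' hr
  obtain ⟨s, t, rfl, rfl, -⟩ := hr
  refine ⟨rNormal_of_N_eq hloc (ns.N_N _), ?_⟩
  rintro ⟨y, hstep⟩
  obtain ⟨⟨s', t', hst, rfl, -⟩, hother⟩ := hstep.rel_of_length_eq
    fun _ _ h => (ns.length_eq_two_of_rules h.1).1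
  obtain ⟨rfl, rfl⟩ : s' = s ∧ t' = t := by simpa using hst.symm
  exact hother ⟨rfl, rfl⟩

lemma conGen_rules_eq (ns : Normalisation S) (hgen : NbarGenerated ns.N) :
    (conGen fun a b : FreeMonoid S => b.toList = ns.N a.toList) =
      conGen fun a b : FreeMonoid S => rules ns.N a.toList b.toList := by
  apply le_antisymm
  · refine Con.conGen_le.mpr fun a b hab => ?_
    have h := conGen_of_reflTransGen (ns.reflTransGen_N hgen a.toList)
    rwa [← hab, FreeMonoid.ofList_toList, FreeMonoid.ofList_toList] at h
  · refine Con.conGen_le.mpr fun a b ⟨s, t, ha, hb, _⟩ => ConGen.Rel.of _ _ ?_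
    rw [ha, hb]

end QN


/-- The rewriting system associated with a quadratic normalisation for `M`
is quadratic, reduced, normalising and confluent, and it presents `M`. -/
theorem statement4 {S M : Type*} [Monoid M] (ns : Normalisation S)
    (hq : Quadratic ns.N)
    (hpres : PresentedBy M S fun w w' => w' = ns.N w) :
    QuadraticRS (rules ns.N) ∧ ReducedRS (rules ns.N) ∧ Normalising (rules ns.N) ∧
      Confluent (rules ns.N) ∧ PresentedBy M S (rules ns.N) := by
  obtain ⟨hloc, hgen⟩ := hq
  exact ⟨fun _ _ => ns.length_eq_two_of_rules,
    reducedRS_rules ns hloc,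
    normalising_of_reflTransGen ns.N (ns.reflTransGen_N hgen)
      fun w => rNormal_of_N_eq hloc (ns.N_N w),
    confluent_of_reflTransGen ns.N (ns.reflTransGen_N hgen) fun _ _ => ns.N_eq_of_rStep,
    hpres.of_conGen_eq (conGen_rules_eq ns hgen)⟩
end

section
/- Let (S, N) be a quadratic normalisation with an N-neutral element e, let (S, R) be the associated rewriting system with rules s·t → N̄(s·t) for s·t ≠ N̄(s·t), and let R_e consist of the rules s·t → π_e(N̄(s·t)) for s, t ∈ S∖{e} with s·t ≠ N̄(s·t). If (S, R) is terminating, then (S∖{e}, R_e) is terminating. -/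
open QN

/-!
Embed a word `w` over `S∖{e}` into `S*` as `w·e^k`. An `R_e`-step `s·t → π_e(N̄(s·t))` inside
`w` lifts to the `R`-step `s·t → N̄(s·t)`: by neutrality `N(e·t) = t·e`, so the `e`'s of the
normal word `N̄(s·t)` all trail, and the rules `e·a → a·e` carry them to the end of the word.
Hence an infinite `R_e`-sequence would give an infinite `R`-sequence.
-/

open Relation

theorem WellFounded.of_simulation {α β : Type*} {r : α → α → Prop} {s : β → β → Prop}
    (P : β → α → Prop) (hr : WellFounded r) (hP : ∀ x, ∃ a, P x a)
    (hsim : ∀ x y a, s y x → P x a → ∃ b, P y b ∧ r b a) : WellFounded s := by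
  have acc_of_rel : ∀ a x, P x a → Acc s x := by
    intro a
    induction a using hr.induction with
    | _ a ih =>
      intro x hxa
      refine ⟨_, fun y hyx => ?_⟩
      obtain ⟨b, hyb, hba⟩ := hsim x y a hyx hxa
      exact ih b hba y hyb
  exact ⟨fun x => let ⟨a, hxa⟩ := hP x; acc_of_rel a x hxa⟩

namespace QN

section Rewriting

variable {A : Type*} {R : List A → List A → Prop}

theorem terminating_iff_wellFounded : Terminating R ↔ WellFounded (flip (RStep R)) := by
  rw [wellFounded_iff_isEmpty_descending_chain, isEmpty_subtype, Terminating, not_exists]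
  rfl

theorem RStep.of_rule {w w' : List A} (h : R w w') : RStep R w w' :=
  ⟨[], [], w, w', h, by simp, by simp⟩

theorem RStep.append_context {x y : List A} (h : RStep R x y) (u v : List A) :
    RStep R (u ++ x ++ v) (u ++ y ++ v) := by
  obtain ⟨u', v', w, w', hr, rfl, rfl⟩ := h
  exact ⟨u ++ u', v' ++ v, w, w', hr, by simp, by simp⟩

theorem reflTransGen_rStep_append_context {x y : List A} (h : ReflTransGen (RStep R) x y)
    (u v : List A) : ReflTransGen (RStep R) (u ++ x ++ v) (u ++ y ++ v) :=
  h.lift (fun z => u ++ z ++ v) fun _ _ hab => hab.append_context u v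

end Rewriting

variable {S : Type*}

theorem Normalisation.N_N_s5 (ns : Normalisation S) (w : List S) : ns.N (ns.N w) = ns.N w := by
  simpa using ns.mid [] [] w

theorem Normalisation.exists_N_pair_eq (ns : Normalisation S) (s t : S) :
    ∃ a b, ns.N [s, t] = [a, b] := by
  match h : ns.N [s, t], ns.length_eq [s, t] with
  | [a, b], _ => exact ⟨a, b, rfl⟩

variable {ns : Normalisation S} {e : S}

theorem Neutral.N_pair_left (he : Neutral ns.N e) (t : S) : ns.N [e, t] = [t, e] := by
  simpa [ns.single] using (he [t]).2

theorem Neutral.rules_pair_left (he : Neutral ns.N e) {a : S} (ha : a ≠ e) :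
    rules ns.N [e, a] [a, e] :=
  ⟨e, a, rfl, (he.N_pair_left a).symm, fun h => ha (List.cons.inj h).1⟩

theorem Neutral.N_pair_eq_pie_append_replicate (he : Neutral ns.N e) (s t : S) :
    ∃ j, ns.N [s, t] = (pie e (ns.N [s, t])).map Subtype.val ++ List.replicate j e := by
  obtain ⟨a, b, hab⟩ := ns.exists_N_pair_eq s t
  have hnormal : ns.N [a, b] = [a, b] := by rw [← hab, ns.N_N_s5]
  rw [hab]
  by_cases ha : a = e
  · subst ha
    obtain rfl : b = a := (List.cons.inj (hnormal.symm.trans (he.N_pair_left b))).1.symm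
    exact ⟨2, by simp [pie]⟩
  · by_cases hb : b = e
    · exact ⟨1, by simp [pie, ha, hb]⟩
    · exact ⟨0, by simp [pie, ha, hb]⟩

theorem Neutral.reflTransGen_cons_map_val (he : Neutral ns.N e) (v : List {s : S // s ≠ e}) :
    ReflTransGen (RStep (rules ns.N)) (e :: v.map Subtype.val) (v.map Subtype.val ++ [e]) := by
  induction v with
  | nil => exact .refl
  | cons a v ih =>
    have hswap :
        RStep (rules ns.N) (e :: a.1 :: v.map Subtype.val) (a.1 :: e :: v.map Subtype.val) := by
      simpa using (RStep.of_rule (he.rules_pair_left a.2)).append_context [] (v.map Subtype.val)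
    exact .head hswap (by simpa using reflTransGen_rStep_append_context ih [a.1] [])

theorem Neutral.reflTransGen_replicate_append_map_val (he : Neutral ns.N e) (j : ℕ)
    (v : List {s : S // s ≠ e}) :
    ReflTransGen (RStep (rules ns.N)) (List.replicate j e ++ v.map Subtype.val)
      (v.map Subtype.val ++ List.replicate j e) := by
  induction j with
  | zero => simpa using .refl
  | succ j ih =>
    calc List.replicate (j + 1) e ++ v.map Subtype.val
        = [e] ++ (List.replicate j e ++ v.map Subtype.val) ++ [] := by simp [List.replicate_succ]
      ReflTransGen (RStep (rules ns.N)) _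
          ([e] ++ (v.map Subtype.val ++ List.replicate j e) ++ []) :=
        reflTransGen_rStep_append_context ih [e] []
      _ = [] ++ (e :: v.map Subtype.val) ++ List.replicate j e := by simp
      ReflTransGen (RStep (rules ns.N)) _
          ([] ++ (v.map Subtype.val ++ [e]) ++ List.replicate j e) :=
        reflTransGen_rStep_append_context (he.reflTransGen_cons_map_val v) [] _
      _ = v.map Subtype.val ++ List.replicate (j + 1) e := by simp [List.replicate_succ]

theorem Neutral.exists_transGen_of_rStep_rulesE (he : Neutral ns.N e)
    {w w' : List {s : S // s ≠ e}} (hstep : RStep (rulesE ns.N e) w w') (k : ℕ) :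
    ∃ k', TransGen (RStep (rules ns.N)) (w.map Subtype.val ++ List.replicate k e)
      (w'.map Subtype.val ++ List.replicate k' e) := by
  obtain ⟨u, v, _, _, ⟨s, t, rfl, hne, rfl⟩, rfl, rfl⟩ := hstep
  obtain ⟨j, hj⟩ := he.N_pair_eq_pie_append_replicate s.1 t.1
  have hrule := (RStep.of_rule (R := rules ns.N) ⟨s.1, t.1, rfl, rfl, hne⟩).append_context
    (u.map Subtype.val) (v.map Subtype.val ++ List.replicate k e)
  generalize pie e (ns.N [s.1, t.1]) = p at hj ⊢
  rw [hj] at hrule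
  have hmove := reflTransGen_rStep_append_context (he.reflTransGen_replicate_append_map_val j v)
    (u.map Subtype.val ++ p.map Subtype.val) (List.replicate k e)
  exact ⟨j + k, .head' (by simpa using hrule) (by simpa using hmove)⟩

end QN

theorem statement5_general {S : Type*} (ns : Normalisation S)
    (e : S) (he : Neutral ns.N e)
    (hterm : Terminating (rules ns.N)) :
    Terminating (rulesE ns.N e) := by
  rw [terminating_iff_wellFounded] at hterm ⊢
  refine hterm.transGen.of_simulation (fun w a => ∃ k, a = w.map Subtype.val ++ List.replicate k e)
    (fun w => ⟨_, 0, rfl⟩) ?_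
  rintro w w' _ hstep ⟨k, rfl⟩
  obtain ⟨k', hk'⟩ := he.exists_transGen_of_rStep_rulesE hstep k
  exact ⟨_, ⟨k', rfl⟩, transGen_swap.2 hk'⟩

/-- If the rewriting system associated with a quadratic normalisation with
an `N`-neutral element `e` is terminating, then so is the induced system over `S∖{e}`. -/
theorem statement5 {S : Type*} (ns : Normalisation S) (hq : Quadratic ns.N)
    (e : S) (he : Neutral ns.N e)
    (hterm : Terminating (rules ns.N)) :
    Terminating (rulesE ns.N e) :=
  statement5_general ns e he hterm
end

section
/- Let (S, N) be a quadratic normalisation. (1) If there exist integers c and c' such that (S, N) is of left-class c and of right-class c', and if c₀ and c₀' denote the least such integers, then |c₀ − c₀'| ≤ 1. (2) If S is finite, then there exists an integer c such that (S, N) is of left-class c. -/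
section Aux
open QN
variable {S : Type*} (ns : Normalisation S)

lemma aux_NN (w : List S) : ns.N (ns.N w) = ns.N w := by
  have := ns.mid [] [] w; simpa using this

lemma aux_two (s t : S) : ∃ s' t', ns.N [s, t] = [s', t'] :=
  List.length_eq_two.mp (by simpa using ns.length_eq [s, t])

lemma aux_nbar {s t s' t' : S} (h : ns.N [s, t] = [s', t']) :
    nbar ns.N s t = (s', t') := by
  unfold nbar; rw [h]; rfl

lemma aux_applyAt_zero (f : S → S → S × S) (w : List S) : applyAt f 0 w = w := rfl

lemma aux_applyAt_one (f : S → S → S × S) (a b c : S) :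
    applyAt f 1 [a, b, c] = [(f a b).1, (f a b).2, c] := rfl

lemma aux_applyAt_two (f : S → S → S × S) (a b c : S) :
    applyAt f 2 [a, b, c] = [a, (f b c).1, (f b c).2] := rfl

lemma aux_applyAt_nil (f : S → S → S × S) (i : ℕ) : applyAt f i [] = [] := by
  match i with
  | 0 => rfl
  | 1 => rfl
  | n + 2 => rfl

lemma aux_applyAt_single (f : S → S → S × S) (i : ℕ) (c : S) : applyAt f i [c] = [c] := by
  match i with
  | 0 => rfl
  | 1 => rfl
  | n + 2 => show c :: applyAt f (n+1) [] = [c]; rw [aux_applyAt_nil]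

lemma aux_applyAt_ge3 (f : S → S → S × S) (n : ℕ) (a b c : S) :
    applyAt f (n + 3) [a, b, c] = [a, b, c] := by
  show a :: applyAt f (n + 2) [b, c] = _
  show a :: b :: applyAt f (n + 1) [c] = _
  rw [aux_applyAt_single]

/-- N of applyAt equals N. -/
lemma aux_N_applyAt (i : ℕ) (a b c : S) :
    ns.N (applyAt (nbar ns.N) i [a, b, c]) = ns.N [a, b, c] := by
  match i with
  | 0 => rfl
  | 1 =>
    obtain ⟨s', t', h⟩ := aux_two ns a b
    rw [aux_applyAt_one, aux_nbar ns h]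
    have := ns.mid [] [c] [a, b]
    rw [h] at this
    simpa using this
  | 2 =>
    obtain ⟨s', t', h⟩ := aux_two ns b c
    rw [aux_applyAt_two, aux_nbar ns h]
    have := ns.mid [a] [] [b, c]
    rw [h] at this
    simpa using this
  | n + 3 => rw [aux_applyAt_ge3]

lemma aux_triple (i : ℕ) (a b c : S) (f : S → S → S × S) :
    ∃ a' b' c', applyAt f i [a, b, c] = [a', b', c'] := by
  match i with
  | 0 => exact ⟨a, b, c, rfl⟩
  | 1 => exact ⟨_, _, _, aux_applyAt_one f a b c⟩
  | 2 => exact ⟨_, _, _, aux_applyAt_two f a b c⟩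
  | n + 3 => exact ⟨a, b, c, aux_applyAt_ge3 f n a b c⟩

/-- idempotence of applyAt for nbar. -/
lemma aux_applyAt_idem (i : ℕ) (a b c : S) :
    applyAt (nbar ns.N) i (applyAt (nbar ns.N) i [a, b, c]) =
      applyAt (nbar ns.N) i [a, b, c] := by
  match i with
  | 0 => rfl
  | 1 =>
    obtain ⟨s', t', h⟩ := aux_two ns a b
    have h2 : ns.N [s', t'] = [s', t'] := by rw [← h, aux_NN]
    rw [aux_applyAt_one, aux_nbar ns h]
    show applyAt (nbar ns.N) 1 [s', t', c] = _
    rw [aux_applyAt_one, aux_nbar ns h2]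
  | 2 =>
    obtain ⟨s', t', h⟩ := aux_two ns b c
    have h2 : ns.N [s', t'] = [s', t'] := by rw [← h, aux_NN]
    rw [aux_applyAt_two, aux_nbar ns h]
    show applyAt (nbar ns.N) 2 [a, s', t'] = _
    rw [aux_applyAt_two, aux_nbar ns h2]
  | n + 3 => rw [aux_applyAt_ge3, aux_applyAt_ge3]

/-- normal length-3 words are fixed by applyAt. -/
lemma aux_normal_fixed (hq : Quadratic ns.N) {a b c : S}
    (h : ns.N [a, b, c] = [a, b, c]) (i : ℕ) :
    applyAt (nbar ns.N) i [a, b, c] = [a, b, c] := by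
  have h1 : ns.N [a, b] = [a, b] := (hq.1 [a, b, c]).mp h [] [c] a b rfl
  have h2 : ns.N [b, c] = [b, c] := (hq.1 [a, b, c]).mp h [a] [] b c rfl
  match i with
  | 0 => rfl
  | 1 => rw [aux_applyAt_one, aux_nbar ns h1]
  | 2 => rw [aux_applyAt_two, aux_nbar ns h2]
  | n + 3 => exact aux_applyAt_ge3 _ n a b c

lemma aux_seq_cons (f : S → S → S × S) (i : ℕ) (u : List ℕ) (w : List S) :
    applySeq f (i :: u) w = applySeq f u (applyAt f i w) := rfl

lemma aux_normal_fixed_seq (hq : Quadratic ns.N) (v : List ℕ) :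
    ∀ {a b c : S}, ns.N [a, b, c] = [a, b, c] →
      applySeq (nbar ns.N) v [a, b, c] = [a, b, c] := by
  induction v with
  | nil => intro a b c h; rfl
  | cons i v ih =>
    intro a b c h
    rw [aux_seq_cons, aux_normal_fixed ns hq h i]
    exact ih h

end Aux

section Aux2
open QN
variable {S : Type*} (ns : Normalisation S)

lemma aux_altFrom_succ (k n : ℕ) : altFrom k (n + 1) = k :: altFrom (3 - k) n := rfl

/-- Core lemma: if a sequence of nbar applications normalises a length-3 word
fixed at position `3-k`, then an alternating sequence starting at `k` does too. -/
lemma aux_core : ∀ (u : List ℕ) (k : ℕ), (k = 1 ∨ k = 2) →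
    ∀ a b c : S, applyAt (nbar ns.N) (3 - k) [a, b, c] = [a, b, c] →
    applySeq (nbar ns.N) u [a, b, c] = ns.N [a, b, c] →
    ∃ m, applySeq (nbar ns.N) (altFrom k m) [a, b, c] = ns.N [a, b, c] := by
  intro u
  induction u with
  | nil =>
    intro k _ a b c _ h
    exact ⟨0, h⟩
  | cons i u ih =>
    intro k hk a b c hfix hseq
    rw [aux_seq_cons] at hseq
    by_cases hyx : applyAt (nbar ns.N) i [a, b, c] = [a, b, c]
    · rw [hyx] at hseq
      exact ih k hk a b c hfix hseq
    · -- then i = k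
      have hik : i = k := by
        rcases hk with rfl | rfl
        · match i with
          | 0 => exact absurd rfl hyx
          | 1 => rfl
          | 2 => exact absurd hfix hyx
          | n + 3 => exact absurd (aux_applyAt_ge3 _ n a b c) hyx
        · match i with
          | 0 => exact absurd rfl hyx
          | 1 => exact absurd hfix hyx
          | 2 => rfl
          | n + 3 => exact absurd (aux_applyAt_ge3 _ n a b c) hyx
      subst hik
      obtain ⟨a', b', c', hy⟩ := aux_triple i a b c (nbar ns.N)
      have hNy : ns.N [a', b', c'] = ns.N [a, b, c] := by
        rw [← hy]; exact aux_N_applyAt ns i a b c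
      have h33 : 3 - (3 - i) = i := by rcases hk with rfl | rfl <;> rfl
      have hfix' : applyAt (nbar ns.N) (3 - (3 - i)) [a', b', c'] = [a', b', c'] := by
        rw [h33, ← hy]
        exact aux_applyAt_idem ns i a b c
      have hseq' : applySeq (nbar ns.N) u [a', b', c'] = ns.N [a', b', c'] := by
        rw [hNy, ← hy]; exact hseq
      have h3k : 3 - i = 1 ∨ 3 - i = 2 := by omega
      obtain ⟨m, hm⟩ := ih (3 - i) h3k a' b' c' hfix' hseq'
      refine ⟨m + 1, ?_⟩
      rw [aux_altFrom_succ, aux_seq_cons, hy, hm, hNy]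

lemma aux_altFrom_append : ∀ (a k : ℕ), (k = 1 ∨ k = 2) → ∀ b,
    altFrom k (a + b) = altFrom k a ++ altFrom (if a % 2 = 0 then k else 3 - k) b := by
  intro a
  induction a with
  | zero => intro k hk b; simp [altFrom]
  | succ a ih =>
    intro k hk b
    have h3 : 3 - k = 1 ∨ 3 - k = 2 := by omega
    have hkk : 3 - (3 - k) = k := by omega
    have h1 : a + 1 + b = (a + b) + 1 := by ring
    rw [h1, aux_altFrom_succ, ih (3 - k) h3 b, aux_altFrom_succ]
    rcases Nat.mod_two_eq_zero_or_one a with h | h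
    · simp [h, Nat.add_mod, hkk]
    · simp [h, Nat.add_mod, hkk]

lemma aux_seq_append (f : S → S → S × S) (u v : List ℕ) (w : List S) :
    applySeq f (u ++ v) w = applySeq f v (applySeq f u w) :=
  List.foldl_append ..

/-- monotonicity. -/
lemma aux_mono (hq : Quadratic ns.N) {m m' : ℕ} (hmm : m ≤ m') {a b c : S}
    (h : applySeq (nbar ns.N) (altFrom 1 m) [a, b, c] = ns.N [a, b, c]) :
    applySeq (nbar ns.N) (altFrom 1 m') [a, b, c] = ns.N [a, b, c] := by
  obtain ⟨d, rfl⟩ := Nat.exists_eq_add_of_le hmm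
  rw [aux_altFrom_append m 1 (Or.inl rfl) d, aux_seq_append, h]
  obtain ⟨x, y, z, hx⟩ := List.length_eq_three.mp
    ((ns.length_eq [a, b, c]).trans (by rfl))
  rw [hx]
  exact aux_normal_fixed_seq ns hq _ (by rw [← hx, aux_NN, hx])

/-- existence of an alternating witness for every length-3 word. -/
lemma aux_exists_witness (hq : Quadratic ns.N) (a b c : S) :
    ∃ m, applySeq (nbar ns.N) (altFrom 1 m) [a, b, c] = ns.N [a, b, c] := by
  obtain ⟨a1, b1, c1, h1⟩ := aux_triple 1 a b c (nbar ns.N)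
  obtain ⟨a2, b2, c2, h2⟩ := aux_triple 2 a1 b1 c1 (nbar ns.N)
  have hN1 : ns.N [a1, b1, c1] = ns.N [a, b, c] := by
    rw [← h1]; exact aux_N_applyAt ns 1 a b c
  have hN2 : ns.N [a2, b2, c2] = ns.N [a, b, c] := by
    rw [← h2, ← hN1]; exact aux_N_applyAt ns 2 a1 b1 c1
  have hfix : applyAt (nbar ns.N) 2 [a2, b2, c2] = [a2, b2, c2] := by
    rw [← h2]; exact aux_applyAt_idem ns 2 a1 b1 c1
  obtain ⟨u, hu⟩ := hq.2 [a2, b2, c2]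
  obtain ⟨m, hm⟩ := aux_core ns u 1 (Or.inl rfl) a2 b2 c2 hfix hu.symm
  refine ⟨m + 2, ?_⟩
  have : altFrom 1 (m + 2) = 1 :: 2 :: altFrom 1 m := rfl
  rw [this, aux_seq_cons, h1, aux_seq_cons, h2, hm, hN2]

end Aux2

section Aux3
open QN
variable {S : Type*} (ns : Normalisation S)

lemma aux_left_to_right {c : ℕ} (h : LeftClass ns.N c) : RightClass ns.N (c + 1) := by
  intro w hw
  obtain ⟨a, b, c', rfl⟩ := List.length_eq_three.mp hw
  obtain ⟨a2, b2, c2, h2⟩ := aux_triple 2 a b c' (nbar ns.N)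
  have hN2 : ns.N [a2, b2, c2] = ns.N [a, b, c'] := by
    rw [← h2]; exact aux_N_applyAt ns 2 a b c'
  have hL := h [a2, b2, c2] rfl
  have : altFrom 2 (c + 1) = 2 :: altFrom 1 c := rfl
  rw [this, aux_seq_cons, h2, ← hL, hN2]

lemma aux_right_to_left {c : ℕ} (h : RightClass ns.N c) : LeftClass ns.N (c + 1) := by
  intro w hw
  obtain ⟨a, b, c', rfl⟩ := List.length_eq_three.mp hw
  obtain ⟨a1, b1, c1, h1⟩ := aux_triple 1 a b c' (nbar ns.N)
  have hN1 : ns.N [a1, b1, c1] = ns.N [a, b, c'] := by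
    rw [← h1]; exact aux_N_applyAt ns 1 a b c'
  have hL := h [a1, b1, c1] rfl
  have : altFrom 1 (c + 1) = 1 :: altFrom 2 c := rfl
  rw [this, aux_seq_cons, h1, ← hL, hN1]

end Aux3


open QN
/-- (1) If `(S, N)` is of some left-class and of some right-class, and `c₀`
and `c₀'` are the minimal such integers, then `|c₀ − c₀'| ≤ 1`. (2) If `S` is finite, then
`(S, N)` is of left-class `c` for some integer `c`. -/
theorem statement7 {S : Type*} (ns : Normalisation S) (hq : Quadratic ns.N) :
    (∀ c₀ c₀' : ℕ,
      IsLeast {c : ℕ | LeftClass ns.N c} c₀ → IsLeast {c : ℕ | RightClass ns.N c} c₀' →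
      c₀ ≤ c₀' + 1 ∧ c₀' ≤ c₀ + 1) ∧
    (Finite S → ∃ c : ℕ, LeftClass ns.N c) := by
  constructor
  · intro c₀ c₀' h h'
    exact ⟨h.2 (aux_right_to_left ns h'.1), h'.2 (aux_left_to_right ns h.1)⟩
  · intro hfin
    cases nonempty_fintype S
    choose F hF using fun p : S × S × S => aux_exists_witness ns hq p.1 p.2.1 p.2.2
    refine ⟨Finset.univ.sup F, ?_⟩
    intro w hw
    obtain ⟨a, b, c, rfl⟩ := List.length_eq_three.mp hw
    exact (aux_mono ns hq (Finset.le_sup (Finset.mem_univ (a, b, c))) (hF (a, b, c))).symm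
end

section
/- If (S, N) is a quadratic normalisation of class (4, 3), then (S, N) is of p-class (4, 3) for every p ≥ 3; that is, for every length-p word w, one has N(w) = N^[p−1]_{α_4}(w) and N(w) = N^[p−1]_{ᾱ_3}(w). -/
/-!
Right-class 3 implies the domino rule for `N̄`. Through the domino rule, the normal
form of `a·z` with `z` normal is obtained by one left-to-right pass of `N̄`, and appending a
letter `l` to `z` only changes the last step of that pass. Hence, for `z` normal of length
`k ≥ 2`, normalising the first `k` letters of `a·z` and then the last `k` letters yields
`N(a·z)`. Both `ᾱ₃ = 2·1·2` and `α₄ = 1·2·1·2` reduce to this situation: after a step at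
position `2` the last `k` letters are normal.
-/

namespace QN

variable {T : Type*}

def NormalPair (N : List T → List T) (s t : T) : Prop := N [s, t] = [s, t]

theorem LocallyNormal.eq_self_iff_isChain {N : List T → List T} (hloc : LocallyNormal N)
    {w : List T} : N w = w ↔ w.IsChain (NormalPair N) := by
  rw [hloc w, List.isChain_iff_forall_rel_of_append_cons_cons]
  exact ⟨fun h _ _ _ _ hw => h _ _ _ _ hw, fun h _ _ _ _ hw => h hw⟩

namespace Normalisation

variable (ns : Normalisation T)

theorem N_idem (w : List T) : ns.N (ns.N w) = ns.N w := by
  simpa using ns.mid [] [] w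

theorem exists_N_pair_eq_s12 (s t : T) : ∃ s' t', ns.N [s, t] = [s', t'] :=
  List.length_eq_two.1 (ns.length_eq [s, t])

theorem nbar_eq_iff {s t s' t' : T} : nbar ns.N s t = (s', t') ↔ ns.N [s, t] = [s', t'] := by
  obtain ⟨x, y, hxy⟩ := ns.exists_N_pair_eq_s12 s t
  simp [nbar, hxy, pairOf]

theorem isChain_N (hloc : LocallyNormal ns.N) (w : List T) :
    (ns.N w).IsChain (NormalPair ns.N) :=
  hloc.eq_self_iff_isChain.1 (ns.N_idem w)

/-- On `t₀·s₁·s₂` with `s₁·s₂` normal the first step of `N̄_{2·1·2}` is trivial, so the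
normal word `N(t₀·s₁·s₂)` is `s₁'·s₂'·t₂`. -/
theorem dominoRule_nbar (hloc : LocallyNormal ns.N) (h3 : RightClass ns.N 3) :
    DominoRule (nbar ns.N) := by
  intro s₁ s₂ s₁' s₂' t₀ t₁ t₂ h₀₁ h₁₂ hs
  have hN : ns.N [t₀, s₁, s₂] = [s₁', s₂', t₂] := by
    rw [h3 _ rfl]
    simp [applySeq, altFrom, applyAt, hs, h₀₁, h₁₂]
  have hchain := ns.isChain_N hloc [t₀, s₁, s₂]
  rw [hN] at hchain
  exact (ns.nbar_eq_iff).2 (List.isChain_cons_cons.1 hchain).1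

theorem length_applyFactorAt (k i : ℕ) (w : List T) :
    (applyFactorAt ns.N k i w).length = w.length := by
  cases i with
  | zero => rfl
  | succ i =>
    simp only [applyFactorAt, List.length_append, ns.length_eq, List.length_take,
      List.length_drop]
    omega

theorem N_applyFactorAt (k i : ℕ) (w : List T) :
    ns.N (applyFactorAt ns.N k i w) = ns.N w := by
  cases i with
  | zero => rfl
  | succ i =>
    rw [applyFactorAt, ns.mid, ← List.drop_drop, List.append_assoc, List.take_append_drop,
      List.take_append_drop]

theorem applyFactorAt_one_append {k : ℕ} {u : List T} (hu : u.length = k) (v : List T) :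
    applyFactorAt ns.N k 1 (u ++ v) = ns.N u ++ v := by
  simp [applyFactorAt, ← hu]

theorem applyFactorAt_two_cons {k : ℕ} {u : List T} (hu : u.length = k) (a : T) :
    applyFactorAt ns.N k 2 (a :: u) = a :: ns.N u := by
  simp [applyFactorAt, ← hu]

theorem normalPair_of_N_eq (hloc : LocallyNormal ns.N) {s t s' t' : T}
    (h : ns.N [s, t] = [s', t']) : NormalPair ns.N s' t' := by
  have hchain := ns.isChain_N hloc [s, t]
  rwa [h, List.isChain_pair] at hchain

theorem normalPair_of_domino (hloc : LocallyNormal ns.N) (h3 : RightClass ns.N 3)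
    {t₀ s₁ s₂ s₁' s₂' t₁ t₂ : T} (h₀₁ : ns.N [t₀, s₁] = [s₁', t₁])
    (h₁₂ : ns.N [t₁, s₂] = [s₂', t₂]) (hs : NormalPair ns.N s₁ s₂) :
    NormalPair ns.N s₁' s₂' :=
  (ns.nbar_eq_iff).1 <| ns.dominoRule_nbar hloc h3 _ _ _ _ _ _ _
    ((ns.nbar_eq_iff).2 h₀₁) ((ns.nbar_eq_iff).2 h₁₂) ((ns.nbar_eq_iff).2 hs)

theorem exists_N_cons_append_singleton (hloc : LocallyNormal ns.N) (h3 : RightClass ns.N 3)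
    (a : T) (u : List T) (l : T) (hul : (u ++ [l]).IsChain (NormalPair ns.N)) :
    ∃ x t, ns.N (a :: u) = x ++ [t] ∧ ns.N (a :: (u ++ [l])) = x ++ ns.N [t, l] := by
  induction u using List.reverseRecOn generalizing l with
  | nil => exact ⟨[], a, by simp [ns.single], rfl⟩
  | append_singleton u m ih =>
    obtain ⟨x, t, -, hx⟩ := ih m (hul.prefix ⟨[l], rfl⟩)
    obtain ⟨m', t', hm⟩ := ns.exists_N_pair_eq_s12 t m
    obtain ⟨l', t'', hl⟩ := ns.exists_N_pair_eq_s12 t' l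
    refine ⟨x ++ [m'], t', by rw [hx, hm]; simp, ?_⟩
    have hml : NormalPair ns.N m l := List.isChain_pair.1 (hul.suffix ⟨u, by simp⟩)
    have hnormal : (x ++ [m'] ++ ns.N [t', l]).IsChain (NormalPair ns.N) := by
      have hxm : (x ++ [m']).IsChain (NormalPair ns.N) := by
        have hchain := ns.isChain_N hloc (a :: (u ++ [m]))
        rw [hx, hm] at hchain
        exact hchain.prefix ⟨[t'], by simp⟩
      rw [hl, List.append_assoc, List.singleton_append, List.isChain_append_cons_cons]
      exact ⟨hxm, ns.normalPair_of_domino hloc h3 hm hl hml,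
        List.isChain_pair.2 (ns.normalPair_of_N_eq hloc hl)⟩
    calc ns.N (a :: (u ++ [m] ++ [l]))
        = ns.N (ns.N (a :: (u ++ [m])) ++ [l]) := by
          simpa using (ns.mid [] [l] (a :: (u ++ [m]))).symm
      _ = ns.N (x ++ [m'] ++ ns.N [t', l]) := by
        rw [hx, hm]; simpa using (ns.mid (x ++ [m']) [] [t', l]).symm
      _ = x ++ [m'] ++ ns.N [t', l] := hloc.eq_self_iff_isChain.2 hnormal

theorem applyFactorSeq_one_two_cons (hloc : LocallyNormal ns.N) (h3 : RightClass ns.N 3)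
    {z : List T} (hz : z.IsChain (NormalPair ns.N)) (hlen : 2 ≤ z.length) (a : T) :
    applyFactorSeq ns.N z.length [1, 2] (a :: z) = ns.N (a :: z) := by
  obtain ⟨u, l, rfl⟩ : ∃ u l, z = u ++ [l] := by
    rcases z.eq_nil_or_concat with rfl | ⟨u, l, rfl⟩
    · simp at hlen
    · exact ⟨u, l, by simp⟩
  obtain ⟨x, t, hx, hxl⟩ := ns.exists_N_cons_append_singleton hloc h3 a u l hz
  obtain ⟨b, x', rfl⟩ : ∃ b x', x = b :: x' := by
    have hlen' := ns.length_eq (a :: u)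
    rw [hx] at hlen'
    rcases x with _ | ⟨b, x'⟩
    · simp at hlen'
      simp [hlen'] at hlen
    · exact ⟨b, x', rfl⟩
  have hx'len : (x' ++ [t, l]).length = (u ++ [l]).length := by
    have := ns.length_eq (a :: u)
    rw [hx] at this
    simp at this ⊢
    omega
  have htail : ns.N (x' ++ [t, l]) = x' ++ ns.N [t, l] := by
    have hchain := ns.isChain_N hloc (a :: (u ++ [l]))
    rw [hxl] at hchain
    calc ns.N (x' ++ [t, l]) = ns.N (x' ++ ns.N [t, l]) := by
          simpa using (ns.mid x' [] [t, l]).symm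
      _ = x' ++ ns.N [t, l] := hloc.eq_self_iff_isChain.2 (hchain.suffix ⟨[b], by simp⟩)
  have hstep₁ : applyFactorAt ns.N (u ++ [l]).length 1 (a :: (u ++ [l]))
      = b :: (x' ++ [t, l]) := by
    rw [← List.cons_append, ns.applyFactorAt_one_append (by simp), hx]
    simp
  simp only [applyFactorSeq, List.foldl_cons, List.foldl_nil, hstep₁,
    ns.applyFactorAt_two_cons hx'len, htail, hxl, List.cons_append]

theorem applyFactorSeq_two_one_two (hloc : LocallyNormal ns.N) (h3 : RightClass ns.N 3)
    {k : ℕ} (hk : 2 ≤ k) {w : List T} (hw : w.length = k + 1) :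
    applyFactorSeq ns.N k [2, 1, 2] w = ns.N w := by
  obtain ⟨a, u, rfl⟩ : ∃ a u, w = a :: u := by
    rcases w with _ | ⟨a, u⟩
    · simp at hw
    · exact ⟨a, u, rfl⟩
  have hu : u.length = k := by simpa using hw
  have hNu : (ns.N u).length = k := by rw [ns.length_eq, hu]
  calc applyFactorSeq ns.N k [2, 1, 2] (a :: u)
      = applyFactorSeq ns.N k [1, 2] (a :: ns.N u) := by
        simp only [applyFactorSeq, List.foldl_cons, ns.applyFactorAt_two_cons hu]
    _ = ns.N (a :: ns.N u) := by
        simpa [hNu] using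
          ns.applyFactorSeq_one_two_cons hloc h3 (ns.isChain_N hloc u) (by omega) a
    _ = ns.N (a :: u) := by simpa using ns.mid [a] [] u

end Normalisation

end QN

open QN
theorem statement12_general {S : Type*} (ns : Normalisation S) (hq : Quadratic ns.N)
    (h3 : RightClass ns.N 3) :
    ∀ p : ℕ, 3 ≤ p → ∀ w : List S, w.length = p →
      ns.N w = applyFactorSeq ns.N (p - 1) (altFrom 1 4) w ∧
      ns.N w = applyFactorSeq ns.N (p - 1) (altFrom 2 3) w := by
  intro p hp w hw
  obtain ⟨k, rfl⟩ : ∃ k, p = k + 1 := ⟨p - 1, by omega⟩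
  have hright {v : List S} (hv : v.length = k + 1) :
      applyFactorSeq ns.N k [2, 1, 2] v = ns.N v :=
    ns.applyFactorSeq_two_one_two hq.1 h3 (by omega) hv
  rw [Nat.add_sub_cancel]
  refine ⟨?_, (hright hw).symm⟩
  calc ns.N w = ns.N (applyFactorAt ns.N k 1 w) := (ns.N_applyFactorAt k 1 w).symm
    _ = applyFactorSeq ns.N k [2, 1, 2] (applyFactorAt ns.N k 1 w) :=
        (hright (by rw [ns.length_applyFactorAt, hw])).symm

/-- A quadratic normalisation of class `(4, 3)` is of `p`-class `(4, 3)`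
for every `p ≥ 3`: on length-`p` words, `N = N^[p−1]_{α_4}` and `N = N^[p−1]_{ᾱ_3}`. -/
theorem statement12 {S : Type*} (ns : Normalisation S) (hq : Quadratic ns.N)
    (h4 : LeftClass ns.N 4) (h3 : RightClass ns.N 3) :
    ∀ p : ℕ, 3 ≤ p → ∀ w : List S, w.length = p →
      ns.N w = applyFactorSeq ns.N (p - 1) (altFrom 1 4) w ∧
      ns.N w = applyFactorSeq ns.N (p - 1) (altFrom 2 3) w :=
  statement12_general ns hq h3
end

section
/- Let ≡ be the congruence on the free monoid of finite sequences of positive integers generated by all shifted copies of the relations 1·1 ≡ 1, 1·2·1·2 ≡ 2·1·2·1 ≡ 2·1·2, and 1·i ≡ i·1 for i ≥ 3 (a shifted copy adds the same nonnegative constant to every entry of both sides). Then for every p ≥ 2 and every i with 1 ≤ i < p, one has δ_p ≡ δ_p·i and δ_p ≡ i·δ_p. -/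
open QN
/-- The base relations of the congruence `≡`: all shifted copies of `1·1 ≡ 1`,
`1·2·1·2 ≡ 2·1·2·1 ≡ 2·1·2` and `1·i ≡ i·1` for `i ≥ 3`. -/
inductive KBase : FreeMonoid ℕ → FreeMonoid ℕ → Prop
  | idem (k : ℕ) : KBase (FreeMonoid.ofList [1 + k, 1 + k]) (FreeMonoid.ofList [1 + k])
  | braid₁ (k : ℕ) : KBase (FreeMonoid.ofList [1 + k, 2 + k, 1 + k, 2 + k])
      (FreeMonoid.ofList [2 + k, 1 + k, 2 + k, 1 + k])
  | braid₂ (k : ℕ) : KBase (FreeMonoid.ofList [2 + k, 1 + k, 2 + k, 1 + k])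
      (FreeMonoid.ofList [2 + k, 1 + k, 2 + k])
  | comm (i k : ℕ) (h : 3 ≤ i) : KBase (FreeMonoid.ofList [1 + k, i + k])
      (FreeMonoid.ofList [i + k, 1 + k])

/-!
Both absorptions go by induction on `p` along `δ_{p+1} = sh(δ_p)·1·2⋯p`, using that the shift
`sh` preserves `≡`.

On the left, a letter `i ≥ 2` is the shifted image of `i - 1` absorbed by `δ_p`, so only `i = 1`
needs an argument. Since `δ_{q+2} = sh²(δ_q)·(2⋯q+1)·(1⋯q+1)` and `1` commutes with all letters
of `sh²(δ_q)`, it suffices that `x` is absorbed by `(x+1⋯x+m)·(x⋯x+m)`. By commutations this word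
is `(x+1)·x·(x+1)·w` for the analogous word `w` of `x + 1`, and `x·(x+1)·x·(x+1) ≡ (x+1)·x·(x+1)`.

On the right, `p` is absorbed by the last letter of `δ_{p+1}`. For `i < p`, the letter `i`
commutes leftwards to produce `X·i·(i+1)·i` with `X = sh(δ_p)·1⋯(i-1)`. The shifted induction
hypothesis shows that `X` absorbs `i + 1` on the right, and inserting it turns `i·(i+1)·i` into
`(i+1)·i·(i+1)·i ≡ (i+1)·i·(i+1)`, from which `i + 1` is removed again.
-/

open List

theorem range'_one_eq_append (j s : ℕ) :
    range' 1 (j + 2 + s) = range' 1 j ++ [j + 1, j + 2] ++ range' (j + 3) s := by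
  rw [show j + 2 + s = j + (s + 2) by omega, ← range'_append_1]
  simp [range'_succ, add_comm, add_left_comm]

theorem delta_succ (p : ℕ) : delta (p + 1) = (delta p).map (· + 1) ++ range' 1 p := by
  cases p <;> rfl

theorem delta_add_two (p : ℕ) :
    delta (p + 2) = (delta p).map (· + 2) ++ (range' 2 p ++ range' 1 (p + 1)) := by
  simp [delta_succ p, delta_succ (p + 1), Function.comp_def, ← range'_succ_left]

theorem one_le_of_mem_delta {p x : ℕ} (hx : x ∈ delta p) : 1 ≤ x := by
  induction p generalizing x with
  | zero => simp [delta] at hx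
  | succ p ih =>
    rw [delta_succ, mem_append, mem_map, mem_range'_1] at hx
    rcases hx with ⟨y, -, rfl⟩ | hx <;> omega

def KEquiv (a b : List ℕ) : Prop :=
  conGen KBase (FreeMonoid.ofList a) (FreeMonoid.ofList b)

infix:50 " ≡ₖ " => KEquiv

namespace KEquiv

variable {a b c d : List ℕ}

@[refl]
theorem refl (a : List ℕ) : a ≡ₖ a := ConGen.Rel.refl _

theorem symm (h : a ≡ₖ b) : b ≡ₖ a := ConGen.Rel.symm h

theorem trans (h₁ : a ≡ₖ b) (h₂ : b ≡ₖ c) : a ≡ₖ c := ConGen.Rel.trans h₁ h₂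

instance : Trans KEquiv KEquiv KEquiv := ⟨trans⟩

theorem append (h₁ : a ≡ₖ b) (h₂ : c ≡ₖ d) : a ++ c ≡ₖ b ++ d := ConGen.Rel.mul h₁ h₂

theorem append_left (x : List ℕ) (h : a ≡ₖ b) : x ++ a ≡ₖ x ++ b := append (refl x) h

theorem append_right (h : a ≡ₖ b) (y : List ℕ) : a ++ y ≡ₖ b ++ y := append h (refl y)

theorem map_succ (h : a ≡ₖ b) : a.map (· + 1) ≡ₖ b.map (· + 1) := by
  have hle : conGen KBase ≤
      (conGen KBase).comap (FreeMonoid.map (· + 1)) (map_mul _) := by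
    refine Con.conGen_le.2 fun x y hxy => (Con.comap_rel _).2 (ConGen.Rel.of _ _ ?_)
    cases hxy with
    | idem k => simpa [add_assoc] using KBase.idem (k + 1)
    | braid₁ k => simpa [add_assoc] using KBase.braid₁ (k + 1)
    | braid₂ k => simpa [add_assoc] using KBase.braid₂ (k + 1)
    | comm i k hi => simpa [add_assoc] using KBase.comm i (k + 1) hi
  exact hle h

variable {x y : ℕ}

theorem idem (hx : 1 ≤ x) : [x, x] ≡ₖ [x] := by
  obtain ⟨k, rfl⟩ : ∃ k, x = 1 + k := ⟨x - 1, by omega⟩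
  exact ConGen.Rel.of _ _ (KBase.idem k)

theorem braid₂ (hx : 1 ≤ x) : [x + 1, x, x + 1, x] ≡ₖ [x + 1, x, x + 1] := by
  obtain ⟨k, rfl⟩ : ∃ k, x = 1 + k := ⟨x - 1, by omega⟩
  rw [show 1 + k + 1 = 2 + k by omega]
  exact ConGen.Rel.of _ _ (KBase.braid₂ k)

theorem braid (hx : 1 ≤ x) : [x, x + 1, x, x + 1] ≡ₖ [x + 1, x, x + 1] := by
  obtain ⟨k, rfl⟩ : ∃ k, x = 1 + k := ⟨x - 1, by omega⟩
  have h₁ : [1 + k, 1 + k + 1, 1 + k, 1 + k + 1] ≡ₖ [1 + k + 1, 1 + k, 1 + k + 1, 1 + k] := by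
    rw [show 1 + k + 1 = 2 + k by omega]
    exact ConGen.Rel.of _ _ (KBase.braid₁ k)
  exact h₁.trans (braid₂ hx)

theorem comm (hx : 1 ≤ x) (hy : 1 ≤ y) (hxy : x + 2 ≤ y ∨ y + 2 ≤ x) : [x, y] ≡ₖ [y, x] := by
  wlog h : x + 2 ≤ y generalizing x y
  · exact (this hy hx hxy.symm (hxy.resolve_left h)).symm
  obtain ⟨k, rfl⟩ : ∃ k, x = 1 + k := ⟨x - 1, by omega⟩
  obtain ⟨i, hi, rfl⟩ : ∃ i, 3 ≤ i ∧ y = i + k := ⟨y - k, by omega, by omega⟩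
  exact ConGen.Rel.of _ _ (KBase.comm i k hi)

theorem cons_append_comm {u : List ℕ} (hx : 1 ≤ x)
    (hu : ∀ y ∈ u, 1 ≤ y ∧ (x + 2 ≤ y ∨ y + 2 ≤ x)) (v : List ℕ) :
    x :: (u ++ v) ≡ₖ u ++ x :: v := by
  induction u with
  | nil => rfl
  | cons y u ih =>
    obtain ⟨hy, hxy⟩ := hu y mem_cons_self
    calc x :: y :: (u ++ v) ≡ₖ y :: x :: (u ++ v) := append_right (comm hx hy hxy) (u ++ v)
      _ ≡ₖ y :: (u ++ x :: v) := append_left [y] (ih fun z hz => hu z (mem_cons_of_mem y hz))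

theorem cons_comm {u : List ℕ} (hx : 1 ≤ x) (hu : ∀ y ∈ u, 1 ≤ y ∧ (x + 2 ≤ y ∨ y + 2 ≤ x)) :
    x :: u ≡ₖ u ++ [x] := by
  simpa using cons_append_comm hx hu []

theorem cons_range'_append_range' {x : ℕ} (hx : 1 ≤ x) (m : ℕ) :
    x :: (range' (x + 1) m ++ range' x (m + 1)) ≡ₖ range' (x + 1) m ++ range' x (m + 1) := by
  induction m generalizing x with
  | zero => exact idem hx
  | succ m ih =>
    set W := range' (x + 2) m ++ range' (x + 1) (m + 1)
    have hW : range' (x + 1) (m + 1) ++ range' x (m + 2) ≡ₖ [x + 1, x] ++ W :=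
      append_left [x + 1] (cons_append_comm hx (fun y hy => by
        rw [mem_range'_1] at hy; omega) _).symm
    calc x :: (range' (x + 1) (m + 1) ++ range' x (m + 2))
        _ ≡ₖ [x, x + 1, x] ++ W := append_left [x] hW
        _ ≡ₖ [x, x + 1, x] ++ ((x + 1) :: W) := append_left _ (ih (by omega)).symm
        _ ≡ₖ [x + 1, x, x + 1] ++ W := append_right (braid hx) W
        _ ≡ₖ [x + 1, x] ++ W := append_left [x + 1, x] (ih (by omega))
        _ ≡ₖ range' (x + 1) (m + 1) ++ range' x (m + 2) := hW.symm

theorem cons_delta {i p : ℕ} (hi : 1 ≤ i) (hip : i < p) : i :: delta p ≡ₖ delta p := by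
  induction i, hi using Nat.le_induction generalizing p with
  | base =>
    obtain ⟨q, rfl⟩ : ∃ q, p = q + 2 := ⟨p - 2, by omega⟩
    rw [delta_add_two]
    calc 1 :: ((delta q).map (· + 2) ++ (range' 2 q ++ range' 1 (q + 1)))
        _ ≡ₖ (delta q).map (· + 2) ++ 1 :: (range' 2 q ++ range' 1 (q + 1)) :=
          cons_append_comm le_rfl (fun y hy => by
            obtain ⟨z, hz, rfl⟩ := mem_map.1 hy
            have := one_le_of_mem_delta hz
            omega) _
        _ ≡ₖ (delta q).map (· + 2) ++ (range' 2 q ++ range' 1 (q + 1)) :=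
          append_left _ (cons_range'_append_range' le_rfl q)
  | succ i hi ih =>
    obtain ⟨q, rfl⟩ : ∃ q, p = q + 1 := ⟨p - 1, by omega⟩
    rw [delta_succ]
    exact append_right (ih (by omega)).map_succ _

theorem append_braid_of_append_succ {X : List ℕ} {x : ℕ} (hx : 1 ≤ x)
    (hX : X ++ [x + 1] ≡ₖ X) : X ++ [x, x + 1, x] ≡ₖ X ++ [x, x + 1] :=
  calc X ++ [x, x + 1, x]
      _ ≡ₖ X ++ [x + 1] ++ [x, x + 1, x] := append_right hX.symm _
      _ = X ++ [x + 1, x, x + 1, x] := by simp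
      _ ≡ₖ X ++ [x + 1, x, x + 1] := append_left X (braid₂ hx)
      _ = X ++ [x + 1] ++ [x, x + 1] := by simp
      _ ≡ₖ X ++ [x, x + 1] := append_right hX _

theorem delta_append_singleton {i p : ℕ} (hi : 1 ≤ i) (hip : i < p) :
    delta p ++ [i] ≡ₖ delta p := by
  induction p generalizing i with
  | zero => omega
  | succ p ih =>
    rw [delta_succ]
    set D := (delta p).map (· + 1)
    obtain ⟨j, rfl⟩ : ∃ j, i = j + 1 := ⟨i - 1, by omega⟩
    rcases (by omega : j + 1 = p ∨ j + 2 ≤ p) with rfl | hjp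
    · calc D ++ range' 1 (j + 1) ++ [j + 1]
          _ = D ++ range' 1 j ++ [j + 1, j + 1] := by simp [range'_concat, add_comm]
          _ ≡ₖ D ++ range' 1 j ++ [j + 1] := append_left _ (idem hi)
          _ = D ++ range' 1 (j + 1) := by simp [range'_concat, add_comm]
    · obtain ⟨s, rfl⟩ : ∃ s, p = j + 2 + s := ⟨p - j - 2, by omega⟩
      have hD : D ++ [j + 2] ≡ₖ D := by simpa using (ih hi (by omega)).map_succ
      set X := D ++ range' 1 j
      have hX : X ++ [j + 2] ≡ₖ X :=
        calc X ++ [j + 2]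
            _ = D ++ (range' 1 j ++ [j + 2]) := by simp [X]
            _ ≡ₖ D ++ (j + 2) :: range' 1 j := append_left D (cons_comm
                (by omega) (fun y hy => by rw [mem_range'_1] at hy; omega)).symm
            _ = D ++ [j + 2] ++ range' 1 j := by simp
            _ ≡ₖ X := append_right hD _
      calc D ++ range' 1 (j + 2 + s) ++ [j + 1]
          _ = X ++ [j + 1, j + 2] ++ (range' (j + 3) s ++ [j + 1]) := by
            simp [X, range'_one_eq_append]
          _ ≡ₖ X ++ [j + 1, j + 2] ++ (j + 1) :: range' (j + 3) s :=
            append_left _ (cons_comm hi (fun y hy => by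
              rw [mem_range'_1] at hy; omega)).symm
          _ = X ++ [j + 1, j + 2, j + 1] ++ range' (j + 3) s := by simp
          _ ≡ₖ X ++ [j + 1, j + 2] ++ range' (j + 3) s :=
            append_right (append_braid_of_append_succ hi hX) _
          _ = D ++ range' 1 (j + 2 + s) := by simp [X, range'_one_eq_append]

end KEquiv

theorem statement13_general (p : ℕ) (i : ℕ) (hi1 : 1 ≤ i) (hip : i < p) :
    conGen KBase (FreeMonoid.ofList (delta p)) (FreeMonoid.ofList (delta p ++ [i])) ∧
    conGen KBase (FreeMonoid.ofList (delta p)) (FreeMonoid.ofList (i :: delta p)) :=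
  ⟨(KEquiv.delta_append_singleton hi1 hip).symm, (KEquiv.cons_delta hi1 hip).symm⟩

/-- For every `p ≥ 2` and `1 ≤ i < p`, one has `δ_p ≡ δ_p·i` and
`δ_p ≡ i·δ_p`, where `≡` is the congruence generated by `KBase`. -/
theorem statement13 (p : ℕ) (hp : 2 ≤ p) (i : ℕ) (hi1 : 1 ≤ i) (hip : i < p) :
    conGen KBase (FreeMonoid.ofList (delta p)) (FreeMonoid.ofList (delta p ++ [i])) ∧
    conGen KBase (FreeMonoid.ofList (delta p)) (FreeMonoid.ofList (i :: delta p)) :=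
  statement13_general p i hi1 hip
end
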